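/- Any rectangular Tetravex problem can be embedded in a larger square Tetravex problem that has a proper tiling if and only if the original rectangular problem does: given an a×b instance with a ≤ b, one can add tiles (all-zero filler tiles together with boundary-marker tiles) to form a b×b instance such that the square instance is properly tileable iff the rectangular one is. -/
import Mathlib


/-- Edge labels: integers plus the special boundary markers `top`, `left`, `right`. -/
inductive Lab where
  | num : ℤ → Lab
  | top : Lab
  | left : Lab
  | right : Lab
deriving DecidableEq

/-- A Tetravex tile: labels on its top, right, bottom and left edges. -/
structure Tile where
  top : Lab
  right : Lab
  bottom : Lab
  left : Lab
deriving DecidableEq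

/-- A placement on an `h × w` board (first index = row, second = column) is proper
if horizontally adjacent tiles agree on the shared vertical edge and vertically
adjacent tiles agree on the shared horizontal edge. -/
def IsProper (h w : ℕ) (p : Fin h → Fin w → Tile) : Prop :=
  (∀ (i : Fin h) (j j' : Fin w), (j' : ℕ) = (j : ℕ) + 1 → (p i j).right = (p i j').left) ∧
  (∀ (i i' : Fin h) (j : Fin w), (i' : ℕ) = (i : ℕ) + 1 → (p i j).bottom = (p i' j).top)

/-- The multiset of tiles used by a placement. -/
def TilesOf (h w : ℕ) (p : Fin h → Fin w → Tile) : Multiset Tile :=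
  (Finset.univ : Finset (Fin h × Fin w)).val.map fun q => p q.1 q.2

/-- A multiset of tiles admits a proper tiling of an `h × w` board. -/
def Tileable (h w : ℕ) (T : Multiset Tile) : Prop :=
  ∃ p : Fin h → Fin w → Tile, TilesOf h w p = T ∧ IsProper h w p

/-! auxiliary -/

def zeroT : Tile := ⟨.num 0, .num 0, .num 0, .num 0⟩
def starT (n : ℤ) : Tile := ⟨.num n, .num n, .num n, .num (n+1)⟩

def labInts : Lab → Finset ℤ
  | .num n => {n}
  | _ => ∅

def tileInts (t : Tile) : Finset ℤ :=
  labInts t.top ∪ labInts t.right ∪ labInts t.bottom ∪ labInts t.left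

lemma mem_tilesOf {h w : ℕ} {p : Fin h → Fin w → Tile} {t : Tile} :
    t ∈ TilesOf h w p ↔ ∃ i j, p i j = t := by
  simp [TilesOf, Prod.exists]

lemma card_tilesOf (h w : ℕ) (p : Fin h → Fin w → Tile) :
    Multiset.card (TilesOf h w p) = h * w := by
  simp [TilesOf]

/-- Extension: if the a×b instance is tileable, we can extend it to a tileable b×b one. -/
lemma extend_tileable (a b : ℕ) (hab : a ≤ b) (T : Multiset Tile)
    (h : Tileable a b T) :
    ∃ T' : Multiset Tile, T ≤ T' ∧ Multiset.card T' = b * b ∧ Tileable b b T' := by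
  obtain ⟨p, hpT, hprop⟩ := h
  set q : Fin b → Fin b → Tile := fun i j =>
    if h : (i : ℕ) < a then p ⟨i, h⟩ j
    else if h' : (i : ℕ) - 1 < a ∧ (i : ℕ) = a then
      ⟨(p ⟨(i : ℕ) - 1, h'.1⟩ j).bottom, .num 0, .num 0, .num 0⟩
    else zeroT with hq
  refine ⟨TilesOf b b q, ?_, card_tilesOf b b q, q, rfl, ?_, ?_⟩
  · -- T ≤ TilesOf b b q
    have hemb : Function.Injective
        (fun x : Fin a × Fin b => ((Fin.castLE hab x.1 : Fin b), x.2)) := by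
      intro x y hxy
      simp only [Prod.mk.injEq] at hxy
      exact Prod.ext (Fin.castLE_injective hab hxy.1) hxy.2
    have hTeq : T = Multiset.map (fun y : Fin b × Fin b => q y.1 y.2)
        ((Finset.univ.map ⟨_, hemb⟩).val) := by
      rw [← hpT]
      simp only [Finset.map_val, Multiset.map_map, TilesOf]
      apply Multiset.map_congr rfl
      intro x _
      simp only [Function.comp_apply, Function.Embedding.coeFn_mk, hq]
      have hx : ((Fin.castLE hab x.1 : Fin b) : ℕ) < a := x.1.isLt
      rw [dif_pos hx]
      rfl
    rw [hTeq]
    calc Multiset.map (fun y : Fin b × Fin b => q y.1 y.2) ((Finset.univ.map ⟨_, hemb⟩).val)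
        ≤ Multiset.map (fun y : Fin b × Fin b => q y.1 y.2) (Finset.univ.val) :=
          Multiset.map_le_map (Finset.val_le_iff.2 (Finset.subset_univ _))
      _ = TilesOf b b q := rfl
  · -- horizontal
    intro i j j' hjj'
    by_cases hi : (i : ℕ) < a
    · simp only [hq, dif_pos hi]
      exact hprop.1 ⟨i, hi⟩ j j' hjj'
    · simp only [hq, dif_neg hi]
      split <;> rfl
  · -- vertical
    intro i i' j hii'
    by_cases hi' : (i' : ℕ) < a
    · have hi : (i : ℕ) < a := by omega
      simp only [hq, dif_pos hi, dif_pos hi']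
      exact hprop.2 ⟨i, hi⟩ ⟨i', hi'⟩ j hii'
    · by_cases hi : (i : ℕ) < a
      · have h' : (i' : ℕ) - 1 < a ∧ (i' : ℕ) = a := by omega
        simp only [hq, dif_pos hi, dif_neg hi', dif_pos h']
        have : (i' : ℕ) - 1 = (i : ℕ) := by omega
        congr 1 <;> simp [this]
      · have h'' : ¬((i' : ℕ) - 1 < a ∧ (i' : ℕ) = a) := by omega
        simp only [hq, dif_neg hi, dif_neg hi', dif_neg h'']
        split <;> rfl

/-- **Squaring a rectangular instance**: any `a × b` rectangular Tetravex
instance with `a ≤ b` can be extended, by adding suitable tiles (all-zero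
filler tiles together with boundary-marker tiles), to a `b × b` square
instance that is properly tileable if and only if the original rectangular
instance is. -/
theorem rect_to_square (a b : ℕ) (hab : a ≤ b) (T : Multiset Tile)
    (hT : Multiset.card T = a * b) :
    ∃ T' : Multiset Tile, T ≤ T' ∧ Multiset.card T' = b * b ∧
      (Tileable b b T' ↔ Tileable a b T) := by
  by_cases htile : Tileable a b T
  · obtain ⟨T', h1, h2, h3⟩ := extend_tileable a b hab T htile
    exact ⟨T', h1, h2, iff_of_true h3 htile⟩
  · rcases eq_or_lt_of_le hab with rfl | hlt
    · exact ⟨T, le_rfl, hT, Iff.rfl⟩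
    · -- a < b, not tileable
      have ha : 1 ≤ a := by
        by_contra h
        apply htile
        have ha0 : a = 0 := by omega
        subst ha0
        have hT0 : T = 0 := by
          simp only [Nat.zero_mul] at hT
          exact Multiset.card_eq_zero.mp hT
        refine ⟨fun i => i.elim0, ?_, ?_, ?_⟩
        · simp [TilesOf, hT0, Multiset.eq_zero_iff_forall_notMem]
        · intro i; exact i.elim0
        · intro i; exact i.elim0
      have hb : 2 ≤ b := by omega
      -- fresh label
      set S : Finset ℤ := T.toFinset.biUnion tileInts with hS
      set S2 : Finset ℤ := (S ∪ S.image (· - 1)) ∪ {0, -1} with hS2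
      obtain ⟨n, hn⟩ := Infinite.exists_notMem_finset S2
      have hnS : n ∉ S := fun h => hn (by simp [hS2, h])
      have hn1S : n + 1 ∉ S := fun h => hn (by
        simp only [hS2, Finset.mem_union, Finset.mem_image]
        exact Or.inl (Or.inr ⟨n + 1, h, by ring⟩))
      have hn0 : n ≠ 0 := fun h => hn (by simp [hS2, h])
      have hn10 : n + 1 ≠ 0 := fun h => hn (by
        have : n = -1 := by omega
        simp [hS2, this])
      have hfresh : ∀ t ∈ T, ∀ m, m ∈ tileInts t → m ∈ S := by
        intro t ht m hm
        exact Finset.mem_biUnion.2 ⟨t, Multiset.mem_toFinset.2 ht, hm⟩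
      set k := b * b - a * b - 1 with hk
      have hcard : a * b + b ≤ b * b := by
        calc a * b + b = (a + 1) * b := by ring
          _ ≤ b * b := Nat.mul_le_mul_right b (by omega)
      refine ⟨(T + Multiset.replicate k zeroT) + {starT n}, ?_, ?_, ?_⟩
      · exact le_trans (Multiset.le_add_right _ _) (Multiset.le_add_right _ _)
      · simp [hT, hk]; omega
      · rw [iff_false_intro htile, iff_false]
        rintro ⟨q, hqT, hprop⟩
        -- star is placed somewhere
        have hstar : starT n ∈ TilesOf b b q := by
          rw [hqT]; simp
        obtain ⟨i, j, hij⟩ := mem_tilesOf.1 hstar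
        -- the neighbour tile
        have hmem : ∀ t, t ∈ TilesOf b b q →
            t ∈ T ∨ t = zeroT ∨ t = starT n := by
          intro t ht
          rw [hqT] at ht
          rcases Multiset.mem_add.1 ht with h | h
          · rcases Multiset.mem_add.1 h with h | h
            · exact Or.inl h
            · exact Or.inr (Or.inl (Multiset.eq_of_mem_replicate h))
          · exact Or.inr (Or.inr (Multiset.mem_singleton.1 h))
        rcases lt_or_ge ((j : ℕ) + 1) b with hj | hj
        · -- right neighbour has left edge = num n
          set j' : Fin b := ⟨(j : ℕ) + 1, hj⟩ with hj'
          have he : (q i j').left = Lab.num n := by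
            rw [← hprop.1 i j j' rfl, hij]; rfl
          rcases hmem (q i j') (mem_tilesOf.2 ⟨i, j', rfl⟩) with h | h | h
          · exact hnS (hfresh _ h n (by simp [tileInts, he, labInts]))
          · rw [h] at he
            simp only [zeroT] at he
            have h2 : (0:ℤ) = n := by injection he
            exact hn0 h2.symm
          · rw [h] at he
            simp only [starT] at he
            have : n + 1 = n := by injection he
            omega
        · -- left neighbour has right edge = num (n+1)
          have hj1 : 1 ≤ (j : ℕ) := by
            have := j.isLt; omega
          set j' : Fin b := ⟨(j : ℕ) - 1, by omega⟩ with hj'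
          have he : (q i j').right = Lab.num (n + 1) := by
            rw [hprop.1 i j' j (by simp [hj']; omega), hij]; rfl
          rcases hmem (q i j') (mem_tilesOf.2 ⟨i, j', rfl⟩) with h | h | h
          · exact hn1S (hfresh _ h (n+1) (by simp [tileInts, he, labInts]))
          · rw [h] at he
            simp only [zeroT] at he
            have h2 : (0:ℤ) = n + 1 := by injection he
            exact hn10 h2.symm
          · rw [h] at he
            simp only [starT] at he
            have : n = n + 1 := by injection he
            omega
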